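/- Let V be a finite-dimensional complex vector space and I a finite set carrying two total orders ≤₁ and ≤₂. Let F₁ be an I-filtration of V for ≤₁ and F₂ an I-filtration of V for ≤₂, and let Γ₀ be an I-grading of V splitting both F₁ and F₂. Then the map g ↦ (i ↦ g(Γ₀(i))) is a bijection from the group U(F₁) ∩ U(F₂) = { g ∈ GL(V) : (g − 1)(F₁(i)) ⊆ F₁(<₁ i) and (g − 1)(F₂(i)) ⊆ F₂(<₂ i) for all i } onto the set of I-gradings of V that split both F₁ and F₂. -/

import Mathlib

open Submodule

variable {V : Type} [AddCommGroup V] [Module ℂ V] [FiniteDimensional ℂ V]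
variable {I : Type} [Fintype I]

/-- `Γ` is an `I`-grading of `V`: the family of subspaces is independent and spans `V`,
so that `V` is their internal direct sum. -/
def IsGrading (Γ : I → Submodule ℂ V) : Prop :=
  iSupIndep Γ ∧ ⨆ i, Γ i = ⊤

/-- The filtration associated to a grading `Γ` and an order `le` on `I`:
`F(Γ,≤)(i) = Σ_{j ≤ i} Γ(j)`. -/
def assocFilt (Γ : I → Submodule ℂ V) (le : I → I → Prop) (i : I) : Submodule ℂ V :=
  ⨆ j ∈ {j | le j i}, Γ j

/-- `F` is an `I`-filtration of `V` with respect to the order `le`. -/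
def IsFiltrationI (le : I → I → Prop) (F : I → Submodule ℂ V) : Prop :=
  ∀ i j, le i j → F i ≤ F j

/-- `F(<i) = Σ_{j < i} F(j)`, where `j < i` means `j ≤ i` and `j ≠ i`. -/
def filtLT (le : I → I → Prop) (F : I → Submodule ℂ V) (i : I) : Submodule ℂ V :=
  ⨆ j ∈ {j | le j i ∧ j ≠ i}, F j

/-- The grading `Γ` splits the filtration `F` (with respect to `le`). -/
def SplitsF (le : I → I → Prop) (F Γ : I → Submodule ℂ V) : Prop :=
  IsGrading Γ ∧ ∀ i, F i = assocFilt Γ le i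

/-- The unipotent radical `U(F)` of the parabolic subgroup attached to the filtration `F`:
all `g ∈ GL(V)` with `(g − 1)(F(i)) ⊆ F(<i)` for all `i`. -/
def Ugrp (le : I → I → Prop) (F : I → Submodule ℂ V) : Set (V ≃ₗ[ℂ] V) :=
  {g | ∀ i, ∀ v ∈ F i, g v - v ∈ filtLT le F i}

/-!
For a grading `Γ` with projections `πᵢ`, a vector of `F(i) = ⊕_{j ≤ i} Γ(j)` differs from its
component `πᵢ v` by an element of `F(<i)`. Hence, given two gradings `Γ₀`, `Γ` splitting `F₁` and
`F₂`, the map `g = Σᵢ πᵢ^Γ ∘ πᵢ^Γ₀` sends `Γ₀(i)` to `Γ(i)` and moves each `F(i)` only by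
elements of `F(<i)`, for both filtrations; the same construction with `Γ₀` and `Γ` exchanged
inverts it, since `πᵢ^Γ₀ ∘ πᵢ^Γ` is congruent to the identity on `Γ₀(i)` modulo `F₁(<i)`, which
meets `Γ₀(i)` trivially. Injectivity: if `g, g' ∈ U(F₁)` agree on the `Γ₀(i)` as subspaces, then
for `v ∈ Γ₀(i)` the difference `g v - g' v` lies in `g Γ₀(i) ∩ F₁(<i) = 0`, because `g Γ₀` again
splits `F₁`.
-/

lemma LinearMap.ext_of_iSup_eq_top {R M N ι : Type*} [Ring R] [AddCommGroup M] [Module R M]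
    [AddCommGroup N] [Module R N] {A : ι → Submodule R M} (hA : iSup A = ⊤) {f g : M →ₗ[R] N}
    (hfg : ∀ i, ∀ v ∈ A i, f v = g v) : f = g :=
  LinearMap.ext_on (by rw [← Submodule.iSup_eq_span, hA]) fun _ hv => by
    obtain ⟨i, hi⟩ := Set.mem_iUnion.mp hv
    exact hfg i _ hi

namespace DirectSum.IsInternal

variable {R M ι : Type*} [Ring R] [AddCommGroup M] [Module R M] [DecidableEq ι]
  {A B : ι → Submodule R M}

noncomputable def proj (h : IsInternal A) (i : ι) : M →ₗ[R] M :=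
  (A i).subtype ∘ₗ component R ι (fun j => A j) i ∘ₗ
    (LinearEquiv.ofBijective (coeLinearMap A) h).symm.toLinearMap

lemma proj_apply (h : IsInternal A) (i : ι) (v : M) :
    h.proj i v = (LinearEquiv.ofBijective (coeLinearMap A) h).symm v i :=
  rfl

lemma proj_mem (h : IsInternal A) (i : ι) (v : M) : h.proj i v ∈ A i :=
  SetLike.coe_mem _

lemma proj_eq_self_of_mem (h : IsInternal A) {i : ι} {v : M} (hv : v ∈ A i) :
    h.proj i v = v := by
  rw [proj_apply, h.ofBijective_coeLinearMap_of_mem hv]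

lemma proj_eq_zero_of_mem (h : IsInternal A) {i j : ι} (hij : i ≠ j) {v : M} (hv : v ∈ A i) :
    h.proj j v = 0 := by
  rw [proj_apply, h.ofBijective_coeLinearMap_of_mem_ne hij hv, ZeroMemClass.coe_zero]

variable [Fintype ι]

lemma sum_proj (h : IsInternal A) (v : M) : ∑ i, h.proj i v = v := by
  have hv : v ∈ ⨆ i, A i := h.submodule_iSup_eq_top ▸ Submodule.mem_top
  induction hv using Submodule.iSup_induction' with
  | mem j w hw =>
    rw [Finset.sum_eq_single_of_mem j (Finset.mem_univ j)
      fun i _ hij => h.proj_eq_zero_of_mem hij.symm hw, h.proj_eq_self_of_mem hw]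
  | zero => simp
  | add x y _ _ hx hy => simp only [map_add, Finset.sum_add_distrib, hx, hy]

lemma mem_biSup_iff_proj_eq_zero (h : IsInternal A) {S : Set ι} {v : M} :
    v ∈ ⨆ j ∈ S, A j ↔ ∀ j ∉ S, h.proj j v = 0 := by
  refine ⟨fun hv j hj => ?_, fun hv => ?_⟩
  · refine (iSup₂_le fun k hk w hw => ?_ : ⨆ k ∈ S, A k ≤ LinearMap.ker (h.proj j)) hv
    exact h.proj_eq_zero_of_mem (ne_of_mem_of_not_mem hk hj) hw
  · rw [← h.sum_proj v]
    refine Submodule.sum_mem _ fun j _ => ?_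
    by_cases hj : j ∈ S
    · exact Submodule.mem_iSup_of_mem j (Submodule.mem_iSup_of_mem hj (h.proj_mem j v))
    · simp [hv j hj]

noncomputable def transport (hA : IsInternal A) (hB : IsInternal B) : M →ₗ[R] M :=
  ∑ i, hB.proj i ∘ₗ hA.proj i

lemma transport_apply_of_mem (hA : IsInternal A) (hB : IsInternal B) {i : ι} {v : M}
    (hv : v ∈ A i) : transport hA hB v = hB.proj i v := by
  rw [transport, LinearMap.sum_apply, Finset.sum_eq_single_of_mem i (Finset.mem_univ i)
    fun j _ hji => by rw [LinearMap.comp_apply, hA.proj_eq_zero_of_mem hji.symm hv, map_zero],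
    LinearMap.comp_apply, hA.proj_eq_self_of_mem hv]

end DirectSum.IsInternal

section Splitting

omit [FiniteDimensional ℂ V] [Fintype I]

variable {le : I → I → Prop} {F Γ : I → Submodule ℂ V}

lemma IsGrading.isInternal [DecidableEq I] (hΓ : IsGrading Γ) : DirectSum.IsInternal Γ :=
  DirectSum.isInternal_submodule_of_iSupIndep_of_iSup_eq_top hΓ.1 hΓ.2

lemma IsGrading.map (g : V ≃ₗ[ℂ] V) (hΓ : IsGrading Γ) :
    IsGrading fun i => (Γ i).map (g : V →ₗ[ℂ] V) :=
  ⟨(g : V →ₗ[ℂ] V).iSupIndep_map g.injective hΓ.1, by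
    rw [← Submodule.map_iSup, hΓ.2, Submodule.map_top, LinearEquiv.range]⟩

lemma map_assocFilt (f : V →ₗ[ℂ] V) (i : I) :
    (assocFilt Γ le i).map f = assocFilt (fun j => (Γ j).map f) le i := by
  simp only [assocFilt, Submodule.map_iSup]

lemma isFiltrationI_assocFilt [IsTrans I le] : IsFiltrationI le (assocFilt Γ le) :=
  fun _ _ hij => biSup_mono fun _ hk => trans_of le hk hij

lemma le_assocFilt [Std.Refl le] (i : I) : Γ i ≤ assocFilt Γ le i :=
  le_iSup₂_of_le i (refl_of le i) le_rfl

lemma filtLT_le (hF : IsFiltrationI le F) (i : I) : filtLT le F i ≤ F i :=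
  iSup₂_le fun j hj => hF j i hj.1

variable [IsPartialOrder I le]

lemma filtLT_mono (F : I → Submodule ℂ V) {i j : I} (hji : le j i) :
    filtLT le F j ≤ filtLT le F i :=
  iSup₂_le fun k hk => le_iSup₂_of_le k
    ⟨trans_of le hk.1 hji, fun hki => hk.2 (antisymm_of le hk.1 (hki ▸ hji))⟩ le_rfl

lemma filtLT_assocFilt (i : I) :
    filtLT le (assocFilt Γ le) i = ⨆ j ∈ {j | le j i ∧ j ≠ i}, Γ j := by
  refine le_antisymm (iSup₂_le fun j hj => iSup₂_le fun k hk => ?_)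
    (iSup₂_le fun k hk => le_iSup₂_of_le k hk (le_iSup₂_of_le k (refl_of le k) le_rfl))
  refine le_iSup₂_of_le k ⟨trans_of le hk hj.1, fun hki => hj.2 ?_⟩ le_rfl
  exact antisymm_of le hj.1 (hki ▸ hk)

lemma SplitsF.isFiltrationI (h : SplitsF le F Γ) : IsFiltrationI le F :=
  funext h.2 ▸ isFiltrationI_assocFilt

lemma SplitsF.grading_le (h : SplitsF le F Γ) (i : I) : Γ i ≤ F i :=
  h.2 i ▸ le_assocFilt i

lemma disjoint_filtLT_assocFilt (hΓ : iSupIndep Γ) (i : I) :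
    Disjoint (Γ i) (filtLT le (assocFilt Γ le) i) := by
  rw [filtLT_assocFilt]
  exact hΓ.disjoint_biSup fun hi => hi.2 rfl

lemma SplitsF.disjoint_filtLT (h : SplitsF le F Γ) (i : I) : Disjoint (Γ i) (filtLT le F i) :=
  funext h.2 ▸ disjoint_filtLT_assocFilt h.1.1 i

end Splitting

section Unipotent

omit [Fintype I]

variable {le : I → I → Prop} {F Γ : I → Submodule ℂ V} {g : V ≃ₗ[ℂ] V}

lemma map_eq_of_mem_Ugrp (hF : IsFiltrationI le F) (hg : g ∈ Ugrp le F) (i : I) :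
    (F i).map (g : V →ₗ[ℂ] V) = F i := by
  refine Submodule.eq_of_le_of_finrank_le (Submodule.map_le_iff_le_comap.mpr fun v hv => ?_)
    (LinearEquiv.finrank_map_eq g (F i)).ge
  simpa using add_mem (filtLT_le hF i (hg i v hv)) hv

variable [IsPartialOrder I le]

lemma SplitsF.map (h : SplitsF le F Γ) (hg : g ∈ Ugrp le F) :
    SplitsF le F fun i => (Γ i).map (g : V →ₗ[ℂ] V) :=
  ⟨h.1.map g, fun i => by
    rw [← map_eq_of_mem_Ugrp h.isFiltrationI hg i, h.2 i, map_assocFilt]⟩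

lemma SplitsF.injOn_map (h : SplitsF le F Γ) :
    Set.InjOn (fun g : V ≃ₗ[ℂ] V => fun i => (Γ i).map (g : V →ₗ[ℂ] V)) (Ugrp le F) := by
  intro g hg g' hg' hgg'
  refine LinearEquiv.toLinearMap_injective (LinearMap.ext_of_iSup_eq_top h.1.2 fun i v hv => ?_)
  have hΓi : (Γ i).map (g : V →ₗ[ℂ] V) = (Γ i).map (g' : V →ₗ[ℂ] V) := congrFun hgg' i
  have hmem : g v - g' v ∈ (Γ i).map (g : V →ₗ[ℂ] V) :=
    sub_mem (Submodule.mem_map_of_mem hv) (hΓi ▸ Submodule.mem_map_of_mem hv)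
  have hlt : g v - g' v ∈ filtLT le F i := by
    simpa using sub_mem (hg i v (h.grading_le i hv)) (hg' i v (h.grading_le i hv))
  exact sub_eq_zero.mp (Submodule.disjoint_def.mp ((h.map hg).disjoint_filtLT i) _ hmem hlt)

end Unipotent

section Transport

omit [FiniteDimensional ℂ V]

variable [DecidableEq I] {le : I → I → Prop} [IsPartialOrder I le] {F Γ Γ' : I → Submodule ℂ V}
  (hΓ : DirectSum.IsInternal Γ) (hΓ' : DirectSum.IsInternal Γ')

open DirectSum.IsInternal

lemma sub_proj_mem_filtLT (hF' : ∀ i, F i = assocFilt Γ' le i) {i : I} {v : V} (hv : v ∈ F i) :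
    v - hΓ'.proj i v ∈ filtLT le F i := by
  rw [hF' i, assocFilt, hΓ'.mem_biSup_iff_proj_eq_zero] at hv
  rw [funext hF', filtLT_assocFilt, hΓ'.mem_biSup_iff_proj_eq_zero]
  intro j hj
  rw [map_sub]
  by_cases hji : j = i
  · rw [hji, hΓ'.proj_eq_self_of_mem (hΓ'.proj_mem i v), sub_self]
  · rw [hv j fun hle => hj ⟨hle, hji⟩, hΓ'.proj_eq_zero_of_mem (Ne.symm hji) (hΓ'.proj_mem i v),
      sub_zero]

lemma proj_proj_eq_self_of_mem (hF : ∀ i, F i = assocFilt Γ le i) (hF' : ∀ i, F i = assocFilt Γ' le i)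
    {i : I} {v : V} (hv : v ∈ Γ i) : hΓ.proj i (hΓ'.proj i v) = v := by
  have hvF : v ∈ F i := hF i ▸ le_assocFilt i hv
  have huF : hΓ'.proj i v ∈ F i := hF' i ▸ le_assocFilt i (hΓ'.proj_mem i v)
  have hlt : hΓ.proj i (hΓ'.proj i v) - v ∈ filtLT le F i := by
    simpa using neg_mem (add_mem (sub_proj_mem_filtLT hΓ' hF' hvF) (sub_proj_mem_filtLT hΓ hF huF))
  have hdisj : Disjoint (Γ i) (filtLT le F i) :=
    funext hF ▸ disjoint_filtLT_assocFilt hΓ.submodule_iSupIndep i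
  exact sub_eq_zero.mp (Submodule.disjoint_def.mp hdisj _ (sub_mem (hΓ.proj_mem i _) hv) hlt)

lemma transport_comp_transport (hF : ∀ i, F i = assocFilt Γ le i)
    (hF' : ∀ i, F i = assocFilt Γ' le i) : transport hΓ' hΓ ∘ₗ transport hΓ hΓ' = LinearMap.id :=
  LinearMap.ext_of_iSup_eq_top hΓ.submodule_iSup_eq_top fun i v hv => by
    rw [LinearMap.comp_apply, transport_apply_of_mem hΓ hΓ' hv,
      transport_apply_of_mem hΓ' hΓ (hΓ'.proj_mem i v), proj_proj_eq_self_of_mem hΓ hΓ' hF hF' hv,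
      LinearMap.id_apply]

lemma transport_sub_mem_filtLT (hF : ∀ i, F i = assocFilt Γ le i)
    (hF' : ∀ i, F i = assocFilt Γ' le i) {i : I} {v : V} (hv : v ∈ F i) :
    transport hΓ hΓ' v - v ∈ filtLT le F i := by
  rw [hF i] at hv
  refine (iSup₂_le fun j hj w hw => ?_ :
    assocFilt Γ le i ≤ (filtLT le F i).comap (transport hΓ hΓ' - LinearMap.id)) hv
  rw [Submodule.mem_comap, LinearMap.sub_apply, LinearMap.id_apply,
    transport_apply_of_mem hΓ hΓ' hw, ← neg_sub]
  exact neg_mem (filtLT_mono F hj (sub_proj_mem_filtLT hΓ' hF' (hF j ▸ le_assocFilt j hw)))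

noncomputable def transportEquiv (hF : ∀ i, F i = assocFilt Γ le i)
    (hF' : ∀ i, F i = assocFilt Γ' le i) : V ≃ₗ[ℂ] V :=
  .ofLinearMap (transport hΓ hΓ') (transport hΓ' hΓ) (transport_comp_transport hΓ' hΓ hF' hF)
    (transport_comp_transport hΓ hΓ' hF hF')

lemma map_transportEquiv (hF : ∀ i, F i = assocFilt Γ le i)
    (hF' : ∀ i, F i = assocFilt Γ' le i) (i : I) :
    (Γ i).map (transportEquiv hΓ hΓ' hF hF' : V →ₗ[ℂ] V) = Γ' i := by
  ext w
  refine ⟨?_, fun hw => ⟨transport hΓ' hΓ w, ?_, ?_⟩⟩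
  · rintro ⟨v, hv, rfl⟩
    exact (transport_apply_of_mem hΓ hΓ' hv).symm ▸ hΓ'.proj_mem i v
  · exact (transport_apply_of_mem hΓ' hΓ hw).symm ▸ hΓ.proj_mem i w
  · exact (transportEquiv hΓ hΓ' hF hF').apply_symm_apply w

end Transport

theorem double_splittings_torsor_general
    (le₁ le₂ : I → I → Prop) (hle₁ : IsLinearOrder I le₁) (hle₂ : IsLinearOrder I le₂)
    (F₁ F₂ Γ₀ : I → Submodule ℂ V)
    (hΓ₀F₁ : SplitsF le₁ F₁ Γ₀) (hΓ₀F₂ : SplitsF le₂ F₂ Γ₀) :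
    Set.BijOn (fun (g : V ≃ₗ[ℂ] V) => fun i => (Γ₀ i).map (g : V →ₗ[ℂ] V))
      (Ugrp le₁ F₁ ∩ Ugrp le₂ F₂)
      {Γ | SplitsF le₁ F₁ Γ ∧ SplitsF le₂ F₂ Γ} := by
  classical
  refine ⟨fun g hg => ⟨hΓ₀F₁.map hg.1, hΓ₀F₂.map hg.2⟩,
    hΓ₀F₁.injOn_map.mono Set.inter_subset_left, ?_⟩
  rintro Γ ⟨hΓF₁, hΓF₂⟩
  have hΓ₀ := hΓ₀F₁.1.isInternal
  have hΓ := hΓF₁.1.isInternal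
  refine ⟨transportEquiv hΓ₀ hΓ hΓ₀F₁.2 hΓF₁.2, ⟨fun i v hv => ?_, fun i v hv => ?_⟩,
    funext (map_transportEquiv hΓ₀ hΓ hΓ₀F₁.2 hΓF₁.2)⟩
  · exact transport_sub_mem_filtLT hΓ₀ hΓ hΓ₀F₁.2 hΓF₁.2 hv
  · exact transport_sub_mem_filtLT hΓ₀ hΓ hΓ₀F₂.2 hΓF₂.2 hv

/-- given a grading `Γ₀` splitting both filtrations `F₁` and `F₂`, the map
`g ↦ (i ↦ g(Γ₀(i)))` is a bijection from `U(F₁) ∩ U(F₂)` onto the set of gradings splitting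
both `F₁` and `F₂`. -/
theorem double_splittings_torsor
    (le₁ le₂ : I → I → Prop) (hle₁ : IsLinearOrder I le₁) (hle₂ : IsLinearOrder I le₂)
    (F₁ F₂ Γ₀ : I → Submodule ℂ V)
    (hF₁ : IsFiltrationI le₁ F₁) (hF₂ : IsFiltrationI le₂ F₂)
    (hΓ₀F₁ : SplitsF le₁ F₁ Γ₀) (hΓ₀F₂ : SplitsF le₂ F₂ Γ₀) :
    Set.BijOn (fun (g : V ≃ₗ[ℂ] V) => fun i => (Γ₀ i).map (g : V →ₗ[ℂ] V))
      (Ugrp le₁ F₁ ∩ Ugrp le₂ F₂)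
      {Γ | SplitsF le₁ F₁ Γ ∧ SplitsF le₂ F₂ Γ} :=
  double_splittings_torsor_general le₁ le₂ hle₁ hle₂ F₁ F₂ Γ₀ hΓ₀F₁ hΓ₀F₂
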